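/- The join operation is associative up to homeomorphism for compact Hausdorff spaces: (X * Y) * Z is homeomorphic to X * (Y * Z). -/

import Mathlib

open scoped unitInterval

noncomputable section

/-- The `n`-dimensional sphere, as the unit sphere in `ℝ^(n+1)`. -/
abbrev Sphere (n : ℕ) : Type :=
  Metric.sphere (0 : EuclideanSpace ℝ (Fin (n + 1))) 1

/-- A chosen base point on the `n`-sphere. -/
def spherePt (n : ℕ) : Sphere n :=
  ⟨EuclideanSpace.single (0 : Fin (n + 1)) (1 : ℝ), by
    simp [EuclideanSpace.norm_single]⟩

/-- Generating relation for the topological join: the quotient of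
`X ⊕ (X × Y × [0,1]) ⊕ Y` where `(x,y,0)` is glued to `x` and `(x,y,1)` to `y`.
(When one factor is empty this yields the other factor.) -/
inductive JoinRel (X Y : Type) [TopologicalSpace X] [TopologicalSpace Y] :
    X ⊕ (X × Y × I) ⊕ Y → X ⊕ (X × Y × I) ⊕ Y → Prop
  | left (x : X) (y : Y) : JoinRel X Y (Sum.inl x) (Sum.inr (Sum.inl (x, y, 0)))
  | right (x : X) (y : Y) : JoinRel X Y (Sum.inr (Sum.inr y)) (Sum.inr (Sum.inl (x, y, 1)))

/-- The topological join `X * Y`. -/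
def Join (X Y : Type) [TopologicalSpace X] [TopologicalSpace Y] : Type :=
  Quot (JoinRel X Y)

instance (X Y : Type) [TopologicalSpace X] [TopologicalSpace Y] :
    TopologicalSpace (Join X Y) := by
  unfold Join; infer_instance

/-- The canonical inclusion of `X` into the join `X * Y`. -/
def Join.inl {X Y : Type} [TopologicalSpace X] [TopologicalSpace Y] (x : X) : Join X Y :=
  Quot.mk _ (Sum.inl x)

/-- The wedge (one-point union) of a family of pointed spaces. -/
def Wedge {ι : Type} (X : ι → Type) [∀ i, TopologicalSpace (X i)] (b : ∀ i, X i) : Type :=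
  Quot (fun p q : Σ i, X i => p.2 = b p.1 ∧ q.2 = b q.1)

instance {ι : Type} (X : ι → Type) [∀ i, TopologicalSpace (X i)] (b : ∀ i, X i) :
    TopologicalSpace (Wedge X b) := by
  unfold Wedge; infer_instance

/-- An abstract simplicial complex on vertex set `V` (empty face excluded). -/
structure AbsSimplicialComplex (V : Type) where
  faces : Set (Finset V)
  not_empty_mem : ∅ ∉ faces
  down_closed : ∀ s ∈ faces, ∀ t ⊆ s, t.Nonempty → t ∈ faces

/-- The geometric realization of an abstract simplicial complex. -/
def realization {V : Type} (K : AbsSimplicialComplex V) : Type :=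
  {f : V → ℝ // (∀ v, 0 ≤ f v) ∧
    ∃ s ∈ K.faces, (∀ v, f v ≠ 0 → v ∈ s) ∧ ∑ v ∈ s, f v = 1}

instance {V : Type} (K : AbsSimplicialComplex V) : TopologicalSpace (realization K) := by
  unfold realization; infer_instance

/-- The order complex of a partial order: simplices are the finite nonempty chains. -/
def orderComplex (P : Type) [PartialOrder P] : AbsSimplicialComplex P where
  faces := {s | s.Nonempty ∧ IsChain (· ≤ ·) (s : Set P)}
  not_empty_mem := by rintro ⟨h, -⟩; exact h.ne_empty rfl
  down_closed := by
    rintro s ⟨-, hc⟩ t hts htne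
    exact ⟨htne, hc.mono (Finset.coe_subset.2 hts)⟩

/-! If `f : A → V` and `g : B → W` are injective maps into real vector spaces and there are linear
"weights" `ℓ`, `m` with `ℓ ∘ f = 1` and `m ∘ g = 1`, then `[a, b, t] ↦ ((1 - t) • f a, t • g b)` is
injective on `A * B`: the weight of the second coordinate recovers `t`. Its image consists of the
pairs of points of the cones `ℝ≥0 • f(A) ∪ {0}` and `ℝ≥0 • g(B) ∪ {0}` of total weight one, so the
cone over that image is the product of the two cones, and the construction iterates. For compact
Hausdorff `X`, evaluation `X → (C(X, ℝ) → ℝ)` is such a map (weight: evaluation at `1`). Hence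
`(X * Y) * Z` and `X * (Y * Z)` both map continuously and injectively onto the set of triples of
cone points of total weight one, and a continuous injection of a compact space into a Hausdorff
space is an embedding.
-/

open Function Set Topology

namespace Join

variable {A B : Type} [TopologicalSpace A] [TopologicalSpace B]

def inr (b : B) : Join A B := Quot.mk _ (Sum.inr (Sum.inr b))

def mk (a : A) (b : B) (t : I) : Join A B := Quot.mk _ (Sum.inr (Sum.inl (a, b, t)))

@[simp] lemma mk_zero (a : A) (b : B) : mk a b 0 = inl a := (Quot.sound (.left a b)).symm

@[simp] lemma mk_one (a : A) (b : B) : mk a b 1 = inr b := (Quot.sound (.right a b)).symm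

lemma ind {P : Join A B → Prop} (hinl : ∀ a, P (inl a)) (hinr : ∀ b, P (inr b))
    (hmk : ∀ a b (t : I), 0 < (t : ℝ) → (t : ℝ) < 1 → P (mk a b t)) (u : Join A B) :
    P u := by
  induction u using Quot.ind with
  | mk p =>
    rcases p with a | ⟨a, b, t⟩ | b
    · exact hinl a
    · change P (mk a b t)
      rcases eq_or_lt_of_le t.2.1 with h0 | h0
      · rw [show t = 0 from Subtype.ext h0.symm, mk_zero]
        exact hinl a
      rcases eq_or_lt_of_le t.2.2 with h1 | h1
      · rw [show t = 1 from Subtype.ext h1, mk_one]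
        exact hinr b
      exact hmk a b t h0 h1
    · exact hinr b

instance [CompactSpace A] [CompactSpace B] : CompactSpace (Join A B) :=
  inferInstanceAs (CompactSpace (Quot (JoinRel A B)))

end Join

section Cone

variable {A V : Type*} [AddCommGroup V] [Module ℝ V]

def cone (f : A → V) : Set V := {v | v = 0 ∨ ∃ c : ℝ, 0 ≤ c ∧ ∃ a, c • f a = v}

variable {f : A → V}

lemma zero_mem_cone : (0 : V) ∈ cone f := Or.inl rfl

lemma smul_mem_cone {c : ℝ} (hc : 0 ≤ c) (a : A) : c • f a ∈ cone f :=
  Or.inr ⟨c, hc, a, rfl⟩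

lemma smul_mem_cone_of_mem {v : V} (hv : v ∈ cone f) {c : ℝ} (hc : 0 ≤ c) :
    c • v ∈ cone f := by
  rcases hv with rfl | ⟨d, hd, a, rfl⟩
  · simpa using zero_mem_cone
  · simpa [smul_smul] using smul_mem_cone (mul_nonneg hc hd) a

variable {ℓ : V →ₗ[ℝ] ℝ}

lemma weight_nonneg_of_mem_cone (hf : ∀ a, ℓ (f a) = 1) {v : V} (hv : v ∈ cone f) :
    0 ≤ ℓ v := by
  rcases hv with rfl | ⟨c, hc, a, rfl⟩ <;> simp [*]

lemma eq_zero_of_mem_cone_of_weight_eq_zero (hf : ∀ a, ℓ (f a) = 1) {v : V} (hv : v ∈ cone f)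
    (h : ℓ v = 0) : v = 0 := by
  rcases hv with rfl | ⟨c, hc, a, rfl⟩
  · rfl
  · simp_all

end Cone

section JoinMap

variable {A B V W : Type} [TopologicalSpace A] [TopologicalSpace B]
  [AddCommGroup V] [Module ℝ V] [AddCommGroup W] [Module ℝ W]

def joinMap (f : A → V) (g : B → W) : Join A B → V × W :=
  Quot.lift (Sum.elim (fun a => (f a, 0))
    (Sum.elim (fun p => ((1 - (p.2.2 : ℝ)) • f p.1, (p.2.2 : ℝ) • g p.2.1))
      (fun b => (0, g b))))
    (by rintro _ _ (⟨a, b⟩ | ⟨a, b⟩) <;> simp)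

variable (f : A → V) (g : B → W)

@[simp] lemma joinMap_inl (a : A) : joinMap f g (Join.inl a) = (f a, 0) := rfl

@[simp] lemma joinMap_inr (b : B) : joinMap f g (Join.inr b) = (0, g b) := rfl

@[simp] lemma joinMap_mk (a : A) (b : B) (t : I) :
    joinMap f g (Join.mk a b t) = ((1 - (t : ℝ)) • f a, (t : ℝ) • g b) := rfl

lemma continuous_joinMap [TopologicalSpace V] [TopologicalSpace W] [ContinuousSMul ℝ V]
    [ContinuousSMul ℝ W] (hf : Continuous f) (hg : Continuous g) : Continuous (joinMap f g) := by
  refine continuous_quot_lift _ (.sumElim (by fun_prop) (.sumElim ?_ (by fun_prop)))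
  fun_prop

variable {f g} {ℓ : V →ₗ[ℝ] ℝ} {m : W →ₗ[ℝ] ℝ}

lemma joinMap_injective (hg : ∀ b, m (g b) = 1) (hfi : Injective f) (hgi : Injective g) :
    Injective (joinMap f g) := by
  intro u v huv
  have weight := congrArg (m ∘ Prod.snd) huv
  induction u using Join.ind <;> induction v using Join.ind <;>
    simp only [Prod.ext_iff, comp_apply, joinMap_inl, joinMap_inr, joinMap_mk, map_smul, hg,
      map_zero, smul_eq_mul, mul_one] at huv weight
  case hinl.hinl => rw [hfi huv.1]
  case hinr.hinr => rw [hgi huv.2]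
  case hmk.hmk a b t ht0 ht1 a' b' t' _ _ =>
    obtain rfl : t = t' := Subtype.ext weight
    rw [smul_right_injective V (sub_ne_zero.2 ht1.ne') huv.1 |> hfi,
      smul_right_injective W ht0.ne' huv.2 |> hgi]
  all_goals linarith

lemma weight_joinMap (hf : ∀ a, ℓ (f a) = 1) (hg : ∀ b, m (g b) = 1) (u : Join A B) :
    ℓ.coprod m (joinMap f g u) = 1 := by
  induction u using Join.ind <;> simp [hf, hg]

lemma range_joinMap (hf : ∀ a, ℓ (f a) = 1) (hg : ∀ b, m (g b) = 1) :
    range (joinMap f g) = {p | p.1 ∈ cone f ∧ p.2 ∈ cone g ∧ ℓ.coprod m p = 1} := by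
  ext ⟨v, w⟩
  constructor
  · rintro ⟨u, hu⟩
    rw [← hu]
    refine ⟨?_, ?_, weight_joinMap hf hg u⟩ <;> induction u using Join.ind
    all_goals first
      | exact zero_mem_cone
      | simpa using smul_mem_cone zero_le_one _
      | exact smul_mem_cone (unitInterval.one_minus_nonneg _) _
      | exact smul_mem_cone (unitInterval.nonneg _) _
  · rintro ⟨hv | ⟨c, hc, a, rfl⟩, hw | ⟨d, hd, b, rfl⟩, hsum⟩ <;> subst_vars <;>
      simp only [LinearMap.coprod_apply, map_zero, map_smul, hf, hg, smul_eq_mul, mul_one]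
        at hsum
    · simp at hsum
    · exact ⟨Join.inr b, by simp [show d = 1 by linarith]⟩
    · exact ⟨Join.inl a, by simp [show c = 1 by linarith]⟩
    · exact ⟨Join.mk a b ⟨d, hd, by linarith⟩, by simp [show 1 - d = c by linarith]⟩

lemma cone_joinMap (hf : ∀ a, ℓ (f a) = 1) (hg : ∀ b, m (g b) = 1) :
    cone (joinMap f g) = cone f ×ˢ cone g := by
  ext ⟨v, w⟩
  constructor
  · rintro (h | ⟨c, hc, u, h⟩)
    · simp_all [zero_mem_cone]
    · obtain ⟨hv, hw, -⟩ : joinMap f g u ∈ _ := range_joinMap hf hg ▸ mem_range_self u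
      rw [← h]
      exact ⟨smul_mem_cone_of_mem hv hc, smul_mem_cone_of_mem hw hc⟩
  · rintro (⟨hv, hw⟩ : v ∈ cone f ∧ w ∈ cone g)
    have hv0 := weight_nonneg_of_mem_cone hf hv
    have hw0 := weight_nonneg_of_mem_cone hg hw
    rcases (add_nonneg hv0 hw0).eq_or_lt with hs | hs
    · left
      rw [eq_zero_of_mem_cone_of_weight_eq_zero hf hv (by linarith),
        eq_zero_of_mem_cone_of_weight_eq_zero hg hw (by linarith), Prod.mk_zero_zero]
    · obtain ⟨u, hu⟩ : (ℓ v + m w)⁻¹ • (v, w) ∈ range (joinMap f g) := by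
        rw [range_joinMap hf hg]
        refine ⟨smul_mem_cone_of_mem hv (by positivity),
          smul_mem_cone_of_mem hw (by positivity), ?_⟩
        rw [map_smul, LinearMap.coprod_apply, smul_eq_mul, inv_mul_cancel₀ hs.ne']
      right
      refine ⟨ℓ v + m w, hs.le, u, ?_⟩
      rw [hu, smul_inv_smul₀ hs.ne']

lemma isEmbedding_joinMap [CompactSpace A] [CompactSpace B] [TopologicalSpace V]
    [TopologicalSpace W] [ContinuousSMul ℝ V] [ContinuousSMul ℝ W] [T2Space V] [T2Space W]
    (hf : IsEmbedding f) (hg : IsEmbedding g) (hg1 : ∀ b, m (g b) = 1) :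
    IsEmbedding (joinMap f g) :=
  (continuous_joinMap f g hf.continuous hg.continuous).isClosedEmbedding
    (joinMap_injective hg1 hf.injective hg.injective) |>.isEmbedding

end JoinMap

section Evaluation

variable (X : Type) [TopologicalSpace X]

def evalVec (x : X) : C(X, ℝ) → ℝ := fun φ => φ x

def evalOne : (C(X, ℝ) → ℝ) →ₗ[ℝ] ℝ := LinearMap.proj 1

variable {X}

@[simp] lemma evalOne_evalVec (x : X) : evalOne X (evalVec X x) = 1 := rfl

lemma evalVec_injective [T35Space X] : Injective (evalVec X) := by
  intro x y hxy
  by_contra hne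
  obtain ⟨φ, hφ, hφxy⟩ := separatesPoints_continuous_of_t35Space hne
  exact hφxy (congrFun hxy ⟨φ, hφ⟩)

lemma isEmbedding_evalVec [CompactSpace X] [T2Space X] : IsEmbedding (evalVec X) :=
  (continuous_pi fun φ => φ.continuous).isClosedEmbedding evalVec_injective |>.isEmbedding

end Evaluation

def Topology.IsEmbedding.homeomorphOfRangeEq {A B C : Type*} [TopologicalSpace A]
    [TopologicalSpace B] [TopologicalSpace C] {e₁ : A → C} {e₂ : B → C}
    (h₁ : IsEmbedding e₁) (h₂ : IsEmbedding e₂) (h : range e₁ = range e₂) : A ≃ₜ B :=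
  h₁.toHomeomorph.trans ((Homeomorph.setCongr h).trans h₂.toHomeomorph.symm)

/-- The join is associative up to homeomorphism for compact Hausdorff spaces. -/
theorem stmt6 (X Y Z : Type)
    [TopologicalSpace X] [CompactSpace X] [T2Space X]
    [TopologicalSpace Y] [CompactSpace Y] [T2Space Y]
    [TopologicalSpace Z] [CompactSpace Z] [T2Space Z] :
    Nonempty (Join (Join X Y) Z ≃ₜ Join X (Join Y Z)) := by
  have weightXY := weight_joinMap (evalOne_evalVec (X := X)) (evalOne_evalVec (X := Y))
  have weightYZ := weight_joinMap (evalOne_evalVec (X := Y)) (evalOne_evalVec (X := Z))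
  have emb₁ : IsEmbedding (joinMap (joinMap (evalVec X) (evalVec Y)) (evalVec Z)) :=
    isEmbedding_joinMap (isEmbedding_joinMap isEmbedding_evalVec isEmbedding_evalVec
      evalOne_evalVec) isEmbedding_evalVec evalOne_evalVec
  have emb₂ : IsEmbedding (joinMap (evalVec X) (joinMap (evalVec Y) (evalVec Z))) :=
    isEmbedding_joinMap isEmbedding_evalVec (isEmbedding_joinMap isEmbedding_evalVec
      isEmbedding_evalVec evalOne_evalVec) weightYZ
  refine ⟨((Homeomorph.prodAssoc _ _ _).isEmbedding.comp emb₁).homeomorphOfRangeEq emb₂ ?_⟩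
  rw [range_comp, range_joinMap weightXY evalOne_evalVec, range_joinMap evalOne_evalVec weightYZ,
    cone_joinMap evalOne_evalVec evalOne_evalVec, cone_joinMap evalOne_evalVec evalOne_evalVec,
    Homeomorph.image_eq_preimage_symm]
  ext ⟨p, q, r⟩
  simp only [mem_preimage, mem_prod, LinearMap.coprod_apply, add_assoc, and_assoc]
  rfl
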